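/- arXiv:2105.14961 — 6 statements merged into one kernel-verified Lean document; each statement's English description precedes it below -/
import Mathlib

section
/- Given a feasible solution (ᾱ, β̄) of the dual arc flow LP (i.e., ᾱ ∈ ℝ^V, β̄ ∈ ℝ₊^m satisfying -ᾱ_u + ᾱ_v + a_{(u,v)}ᵀβ̄ ≤ c_{(u,v)} for all arcs (u,v) ∈ A, and ᾱ_{v⁺} - ᾱ_{v⁻} ≤ 0), the vector β̄ is feasible for the dual path flow LP, i.e., a_pᵀβ̄ ≤ c_p for every source-sink path p. -/
/-- `IsPath A u p v` : `p` is a list of consecutive arcs of `A` from `u` to `v`. -/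
def IsPath {V : Type*} (A : Finset (V × V)) : V → List (V × V) → V → Prop
  | u, [], v => u = v
  | u, e :: rest, v => e.1 = u ∧ e ∈ A ∧ IsPath A e.2 rest v

lemma aux_path {V : Type*} (A : Finset (V × V)) {m : ℕ}
    (c : V × V → ℤ) (a : V × V → Fin m → ℤ) (α : V → ℝ) (β : Fin m → ℝ)
    (harc : ∀ e ∈ A, -α e.1 + α e.2 + ∑ k, (a e k : ℝ) * β k ≤ (c e : ℝ)) :
    ∀ (p : List (V × V)) (u v : V), IsPath A u p v →
      ∑ k, (((p.map fun e => a e k).sum : ℤ) : ℝ) * β k ≤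
        (((p.map c).sum : ℤ) : ℝ) + α u - α v := by
  intro p
  induction p with
  | nil => intro u v h; cases h; simp
  | cons e rest ih =>
    intro u v h
    obtain ⟨he1, heA, hrest⟩ := h
    have h1 := harc e heA
    have h2 := ih e.2 v hrest
    simp only [List.map_cons, List.sum_cons, Int.cast_add]
    have : ∑ k, ((a e k : ℝ) + (((rest.map fun e => a e k).sum : ℤ) : ℝ)) * β k
        = (∑ k, (a e k : ℝ) * β k) +
          ∑ k, (((rest.map fun e => a e k).sum : ℤ) : ℝ) * β k := by
      rw [← Finset.sum_add_distrib]
      congr 1; ext k; ring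
    rw [this]
    rw [he1] at h1
    linarith

/-- Feasibility of the β-part of a dual arc flow solution for the dual path flow LP. -/
theorem stmt_0 {V : Type*} (A : Finset (V × V)) (m : ℕ)
    (c : V × V → ℤ) (a : V × V → Fin m → ℤ)
    (vplus vminus : V) (α : V → ℝ) (β : Fin m → ℝ)
    (hβ : ∀ k, 0 ≤ β k)
    (harc : ∀ e ∈ A, -α e.1 + α e.2 + ∑ k, (a e k : ℝ) * β k ≤ (c e : ℝ))
    (hst : α vplus - α vminus ≤ 0) :
    ∀ p : List (V × V), IsPath A vplus p vminus →
      ∑ k, (((p.map fun e => a e k).sum : ℤ) : ℝ) * β k ≤ (((p.map c).sum : ℤ) : ℝ) := by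
  intro p hp
  have := aux_path A c a α β harc p vplus vminus hp
  linarith
end

section
/- Given a feasible solution β̄ of the dual path flow LP (a_pᵀβ̄ ≤ c_p for all source-sink paths p), define ᾱ_{v⁺} = 0 and, for each other node v reachable from v⁺, ᾱ_v = min over incoming arcs (u,v) of ᾱ_u + (c_{(u,v)} - a_{(u,v)}ᵀβ̄) (i.e., ᾱ_v is the shortest-path cost from v⁺ to v with arc costs c_{(u,v)} - a_{(u,v)}ᵀβ̄). Then (ᾱ, β̄) is feasible for the dual arc flow LP: -ᾱ_u + ᾱ_v + a_{(u,v)}ᵀβ̄ ≤ c_{(u,v)} for all arcs (u,v), and ᾱ_{v⁺} - ᾱ_{v⁻} ≤ 0. -/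
lemma isPath_append {V : Type*} {A : Finset (V × V)} :
    ∀ {u : V} (p : List (V × V)) {v w : V} (q : List (V × V)),
      IsPath A u p v → IsPath A v q w → IsPath A u (p ++ q) w
  | u, [], v, w, q, hp, hq => by cases hp; exact hq
  | u, e :: rest, v, w, q, hp, hq =>
      ⟨hp.1, hp.2.1, isPath_append rest q hp.2.2 hq⟩

/-- Shortest-path node potentials turn a dual path flow solution into a dual arc flow solution. -/
theorem stmt_1 {V : Type*} (A : Finset (V × V)) (m : ℕ)
    (c : V × V → ℤ) (a : V × V → Fin m → ℤ)
    (vplus vminus : V) (α : V → ℝ) (β : Fin m → ℝ)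
    (hβ : ∀ k, 0 ≤ β k)
    (hsource : ∀ e ∈ A, e.2 ≠ vplus)
    (hfeas : ∀ p : List (V × V), IsPath A vplus p vminus →
      ∑ k, (((p.map fun e => a e k).sum : ℤ) : ℝ) * β k ≤ (((p.map c).sum : ℤ) : ℝ))
    (hαs : α vplus = 0)
    (hα : ∀ v, v ≠ vplus →
      IsLeast {x : ℝ | ∃ p : List (V × V), IsPath A vplus p v ∧
        x = (((p.map c).sum : ℤ) : ℝ) - ∑ k, (((p.map fun e => a e k).sum : ℤ) : ℝ) * β k}
        (α v)) :
    (∀ e ∈ A, -α e.1 + α e.2 + ∑ k, (a e k : ℝ) * β k ≤ (c e : ℝ)) ∧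
      α vplus - α vminus ≤ 0 := by
  constructor
  · intro e he
    have hv2 : e.2 ≠ vplus := hsource e he
    have hmem := (hα e.2 hv2).2
    -- find a path to e.1 realizing α e.1
    have key : α e.2 ≤ α e.1 + ((c e : ℝ) - ∑ k, (a e k : ℝ) * β k) := by
      by_cases h1 : e.1 = vplus
      · -- path [e]
        have hp : IsPath A vplus [e] e.2 := ⟨h1, he, rfl⟩
        have := hmem ⟨[e], hp, rfl⟩
        simp only [List.map_cons, List.map_nil, List.sum_cons, List.sum_nil, add_zero] at this
        rw [h1, hαs]; push_cast at this ⊢; linarith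
      · obtain ⟨p, hp, hval⟩ := (hα e.1 h1).1
        have hpe : IsPath A vplus (p ++ [e]) e.2 :=
          isPath_append p [e] hp ⟨rfl, he, rfl⟩
        have hle := hmem ⟨p ++ [e], hpe, rfl⟩
        have hc : (((p ++ [e]).map c).sum : ℝ) = ((p.map c).sum : ℤ) + (c e : ℝ) := by
          push_cast [List.map_append]; simp
        have ha : ∀ k, ((((p ++ [e]).map fun x => a x k).sum : ℤ) : ℝ)
            = (((p.map fun x => a x k).sum : ℤ) : ℝ) + (a e k : ℝ) := by
          intro k; push_cast [List.map_append]; simp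
        rw [hc] at hle
        have : (∑ k, ((((p ++ [e]).map fun x => a x k).sum : ℤ) : ℝ) * β k)
            = (∑ k, (((p.map fun x => a x k).sum : ℤ) : ℝ) * β k)
              + ∑ k, (a e k : ℝ) * β k := by
          rw [← Finset.sum_add_distrib]
          exact Finset.sum_congr rfl fun k _ => by rw [ha k, add_mul]
        rw [this] at hle
        rw [hval]; linarith
    linarith
  · by_cases h : vminus = vplus
    · simp [h]
    · obtain ⟨p, hp, hval⟩ := (hα vminus h).1
      have := hfeas p hp
      rw [hαs, hval]; linarith
end

section
/- There is a one-to-many correspondence between feasible solutions of the dual path flow LP and feasible solutions of the dual arc flow LP in which the β component is preserved: β̄ is feasible for the dual path flow LP if and only if there exists ᾱ ∈ ℝ^V such that (ᾱ, β̄) is feasible for the dual arc flow LP. -/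
/-- Reduced cost of a path. -/
noncomputable def pweight {V : Type*} (m : ℕ) (c : V × V → ℤ) (a : V × V → Fin m → ℤ)
    (β : Fin m → ℝ) (p : List (V × V)) : ℝ :=
  (((p.map c).sum : ℤ) : ℝ) - ∑ k, (((p.map fun e => a e k).sum : ℤ) : ℝ) * β k

lemma pweight_nil {V : Type*} (m : ℕ) (c : V × V → ℤ) (a : V × V → Fin m → ℤ)
    (β : Fin m → ℝ) : pweight m c a β [] = 0 := by
  simp [pweight]

lemma pweight_append {V : Type*} (m : ℕ) (c : V × V → ℤ) (a : V × V → Fin m → ℤ)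
    (β : Fin m → ℝ) (p q : List (V × V)) :
    pweight m c a β (p ++ q) = pweight m c a β p + pweight m c a β q := by
  simp only [pweight, List.map_append, List.sum_append, Int.cast_add, add_mul,
    Finset.sum_add_distrib]
  ring

lemma pweight_single {V : Type*} (m : ℕ) (c : V × V → ℤ) (a : V × V → Fin m → ℤ)
    (β : Fin m → ℝ) (e : V × V) :
    pweight m c a β [e] = (c e : ℝ) - ∑ k, (a e k : ℝ) * β k := by
  simp [pweight]

lemma isPath_append_single {V : Type*} (A : Finset (V × V)) :
    ∀ (p : List (V × V)) (u v : V), IsPath A u p v → ∀ e : V × V, e ∈ A → e.1 = v →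
      IsPath A u (p ++ [e]) e.2 := by
  intro p
  induction p with
  | nil =>
    intro u v h e he h1
    exact ⟨by rw [h1]; exact h.symm, he, rfl⟩
  | cons f rest ih =>
    intro u v h e he h1
    obtain ⟨hf1, hfA, hrest⟩ := h
    exact ⟨hf1, hfA, ih _ _ hrest e he h1⟩

lemma isPath_to_source {V : Type*} {A : Finset (V × V)} {vplus : V}
    (hsource : ∀ e ∈ A, e.2 ≠ vplus) :
    ∀ (p : List (V × V)) (u : V), IsPath A u p vplus → p = [] := by
  intro p
  induction p with
  | nil => intro u _; rfl
  | cons e rest ih =>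
    intro u h
    obtain ⟨h1, he, hrest⟩ := h
    have hrnil := ih e.2 hrest
    subst hrnil
    exact absurd hrest (hsource e he)

lemma telescope {V : Type*} {A : Finset (V × V)} {m : ℕ} {c : V × V → ℤ}
    {a : V × V → Fin m → ℤ} {β : Fin m → ℝ} {α : V → ℝ}
    (hα : ∀ e ∈ A, α e.2 - α e.1 ≤ pweight m c a β [e]) :
    ∀ (p : List (V × V)) (u v : V), IsPath A u p v → α v - α u ≤ pweight m c a β p := by
  intro p
  induction p with
  | nil =>
    intro u v h
    rw [show u = v from h, pweight_nil]
    simp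
  | cons e rest ih =>
    intro u v h
    obtain ⟨h1, he, hrest⟩ := h
    have h2 := ih e.2 v hrest
    have h3 := hα e he
    have : pweight m c a β (e :: rest) = pweight m c a β [e] + pweight m c a β rest := by
      rw [← pweight_append]; rfl
    rw [this, h1] at *
    linarith

/-- Dual correspondence: β is dual path flow feasible iff it extends to a dual arc flow solution. -/
theorem stmt_2 {V : Type*} (A : Finset (V × V)) (m : ℕ)
    (c : V × V → ℤ) (a : V × V → Fin m → ℤ)
    (vplus vminus : V) (β : Fin m → ℝ)
    (hβ : ∀ k, 0 ≤ β k)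
    (hsource : ∀ e ∈ A, e.2 ≠ vplus)
    (hreach : ∀ v : V, ∃ p : List (V × V), IsPath A vplus p v)
    (hfin : ∀ v : V, {p : List (V × V) | IsPath A vplus p v}.Finite) :
    (∀ p : List (V × V), IsPath A vplus p vminus →
        ∑ k, (((p.map fun e => a e k).sum : ℤ) : ℝ) * β k ≤ (((p.map c).sum : ℤ) : ℝ)) ↔
      (∃ α : V → ℝ,
        (∀ e ∈ A, -α e.1 + α e.2 + ∑ k, (a e k : ℝ) * β k ≤ (c e : ℝ)) ∧
          α vplus - α vminus ≤ 0) := by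
  classical
  constructor
  · intro h
    have hne : ∀ v : V, ((hfin v).toFinset).Nonempty := fun v => by
      obtain ⟨p, hp⟩ := hreach v
      exact ⟨p, (Set.Finite.mem_toFinset _).mpr hp⟩
    refine ⟨fun v => ((hfin v).toFinset).inf' (hne v) (pweight m c a β), ?_, ?_⟩
    · intro e he
      obtain ⟨p, hpmem, hpeq⟩ := Finset.exists_mem_eq_inf' (hne e.1) (pweight m c a β)
      have hp : IsPath A vplus p e.1 := (hfin e.1).mem_toFinset.mp hpmem
      have hq : IsPath A vplus (p ++ [e]) e.2 :=
        isPath_append_single A p vplus e.1 hp e he rfl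
      have h1 : ((hfin e.2).toFinset).inf' (hne e.2) (pweight m c a β)
          ≤ pweight m c a β (p ++ [e]) :=
        Finset.inf'_le _ ((hfin e.2).mem_toFinset.mpr hq)
      rw [pweight_append] at h1
      simp only []
      have h2 : ((hfin e.1).toFinset).inf' (hne e.1) (pweight m c a β)
          = pweight m c a β p := hpeq
      rw [pweight_single] at h1
      linarith
    · obtain ⟨q, hqmem, hqeq⟩ := Finset.exists_mem_eq_inf' (hne vminus) (pweight m c a β)
      have hq : IsPath A vplus q vminus := (hfin vminus).mem_toFinset.mp hqmem
      have h0 : 0 ≤ pweight m c a β q := by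
        have := h q hq
        simp only [pweight]
        linarith
      have h1 : ((hfin vplus).toFinset).inf' (hne vplus) (pweight m c a β)
          ≤ pweight m c a β ([] : List (V × V)) :=
        Finset.inf'_le _ ((hfin vplus).mem_toFinset.mpr (rfl : IsPath A vplus [] vplus))
      rw [pweight_nil] at h1
      have h2 : ((hfin vminus).toFinset).inf' (hne vminus) (pweight m c a β)
          = pweight m c a β q := hqeq
      linarith
  · rintro ⟨α, hα, hαv⟩ p hp
    have hα' : ∀ e ∈ A, α e.2 - α e.1 ≤ pweight m c a β [e] := by
      intro e he
      have := hα e he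
      rw [pweight_single]
      linarith
    have := telescope hα' p vplus vminus hp
    simp only [pweight] at this
    linarith
end

section
/- Consider a path flow model min Σ_p c_p λ_p subject to Σ_p a_p λ_p ≥ b, λ ≥ 0, where the first m' rows are covering constraints (a_{pk} ≥ 0 for all p and k ≤ m') and the remaining rows are packing constraints (a_{pk} ≤ 0 for all p and k > m'), with all coefficients a_{pk} integers. Let ε > 0 and let β̄ ∈ ℝ₊^m be a possibly infeasible dual vector whose minimum path reduced cost satisfies c_p - a_pᵀβ̄ > -ε for all p. If every c_p is an integer multiple of ε, then the rounded vector β̄' with β̄'_k = ε⌊β̄_k/ε⌋ for k ≤ m' and β̄'_k = ε⌈β̄_k/ε⌉ for k > m' satisfies c_p - a_pᵀβ̄' ≥ 0 for all paths p, i.e., β̄' is dual-feasible. -/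
/-- Rounding an almost-feasible dual vector (down on covering rows, up on packing rows)
yields a dual-feasible vector, provided all path costs are multiples of ε. -/
theorem stmt_5 {P : Type*} (m m' : ℕ) (c : P → ℝ) (a : P → Fin m → ℤ)
    (ε : ℝ) (hε : 0 < ε) (β : Fin m → ℝ) (hβ : ∀ k, 0 ≤ β k)
    (hcov : ∀ p, ∀ k : Fin m, (k : ℕ) < m' → 0 ≤ a p k)
    (hpack : ∀ p, ∀ k : Fin m, m' ≤ (k : ℕ) → a p k ≤ 0)
    (hrc : ∀ p, -ε < c p - ∑ k, (a p k : ℝ) * β k)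
    (hmult : ∀ p, ∃ z : ℤ, c p = (z : ℝ) * ε) :
    ∀ p, 0 ≤ c p - ∑ k, (a p k : ℝ) *
      (if (k : ℕ) < m' then ε * (⌊β k / ε⌋ : ℝ) else ε * (⌈β k / ε⌉ : ℝ)) := by
  intro p
  obtain ⟨z, hz⟩ := hmult p
  set N : ℤ := ∑ k, a p k * (if (k : ℕ) < m' then ⌊β k / ε⌋ else ⌈β k / ε⌉) with hN
  have hS : ∑ k, (a p k : ℝ) *
      (if (k : ℕ) < m' then ε * (⌊β k / ε⌋ : ℝ) else ε * (⌈β k / ε⌉ : ℝ))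
      = (N : ℝ) * ε := by
    rw [hN]
    push_cast
    rw [Finset.sum_mul]
    refine Finset.sum_congr rfl fun k _ => ?_
    split_ifs <;> ring
  have hle : (N : ℝ) * ε ≤ ∑ k, (a p k : ℝ) * β k := by
    rw [← hS]
    apply Finset.sum_le_sum
    intro k _
    have hdiv : ε * (β k / ε) = β k := by field_simp
    split_ifs with h
    · have ha : (0 : ℝ) ≤ (a p k : ℝ) := by exact_mod_cast hcov p k h
      have h1 : ε * (⌊β k / ε⌋ : ℝ) ≤ β k := by
        calc ε * (⌊β k / ε⌋ : ℝ) ≤ ε * (β k / ε) := by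
              exact mul_le_mul_of_nonneg_left (Int.floor_le _) hε.le
          _ = β k := hdiv
      exact mul_le_mul_of_nonneg_left h1 ha
    · have ha : (a p k : ℝ) ≤ 0 := by exact_mod_cast hpack p k (le_of_not_gt h)
      have h1 : β k ≤ ε * (⌈β k / ε⌉ : ℝ) := by
        calc β k = ε * (β k / ε) := hdiv.symm
          _ ≤ ε * (⌈β k / ε⌉ : ℝ) := by
              exact mul_le_mul_of_nonneg_left (Int.le_ceil _) hε.le
      exact mul_le_mul_of_nonpos_left h1 ha
  have hgt : -ε < ((z : ℝ) - N) * ε := by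
    have := hrc p
    nlinarith [hle]
  have hzint : (0 : ℤ) ≤ z - N := by
    by_contra hcon
    push_neg at hcon
    have : z - N ≤ -1 := by omega
    have h2 : ((z : ℝ) - N) * ε ≤ (-1 : ℝ) * ε := by
      apply mul_le_mul_of_nonneg_right _ hε.le
      exact_mod_cast this
    linarith
  rw [hS, hz]
  have : (0 : ℝ) ≤ ((z : ℝ) - N) * ε := by
    apply mul_nonneg _ hε.le
    exact_mod_cast hzint
  linarith
end

section
/- (Redundant-arc removal preserves the right-branch constraint) Let B ⊆ A be a set of arcs in an acyclic network, and let (u*,v) ∈ B be an arc such that every path from v⁺ to u* contains at least one arc of B. Then for every source-sink path p containing (u*,v), p contains at least two arcs of B; consequently, every integer flow satisfying Σ_{(u,v)∈B\{(u*,v)}} φ_{(u,v)} ≥ 1 is exactly the set of integer flows satisfying Σ_{(u,v)∈B} φ_{(u,v)} ≥ 1, i.e., removing (u*,v) from B does not change the set of integer solutions satisfying the branching constraint. -/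
theorem IsPath.of_append_cons {V : Type*} {A : Finset (V × V)} :
    ∀ {s : List (V × V)} {e : V × V} {t : List (V × V)} {u v : V},
      IsPath A u (s ++ e :: t) v → IsPath A u s e.1
  | [], _, _, _, _, h => h.1.symm
  | _ :: _, _, _, _, _, h => ⟨h.1, h.2.1, IsPath.of_append_cons h.2.2⟩

theorem IsPath.exists_split_of_redundant {V : Type*} {A B : Finset (V × V)} {u v : V}
    {e0 : V × V} (hred : ∀ p, IsPath A u p e0.1 → ∃ e ∈ p, e ∈ B)
    {p : List (V × V)} (hp : IsPath A u p v) (h : e0 ∈ p) :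
    ∃ s t, p = s ++ e0 :: t ∧ ∃ e ∈ s, e ∈ B ∧ e ≠ e0 := by
  obtain ⟨s, t, rfl, hs⟩ := List.eq_append_cons_of_mem h
  obtain ⟨e, he, heB⟩ := hred s hp.of_append_cons
  exact ⟨s, t, rfl, e, he, heB, fun h => hs (h ▸ he)⟩

theorem Finsupp.one_le_sum_mul_countP_iff {α : Type*} (P : α → Bool) (lam : List α →₀ ℕ) :
    1 ≤ lam.sum (fun l n => n * l.countP P) ↔ ∃ l ∈ lam.support, ∃ a ∈ l, P a := by
  simp [Nat.one_le_iff_ne_zero, Finsupp.sum, Finset.sum_eq_zero_iff, List.countP_eq_zero]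

theorem stmt_10_general {V : Type*} [DecidableEq V] (A B : Finset (V × V))
    (vplus vminus : V) (e0 : V × V) (he0 : e0 ∈ B)
    (hred : ∀ p : List (V × V), IsPath A vplus p e0.1 → ∃ e ∈ p, e ∈ B) :
    (∀ p : List (V × V), IsPath A vplus p vminus → e0 ∈ p →
        2 ≤ p.countP (fun e => decide (e ∈ B))) ∧
    ∀ lam : (List (V × V)) →₀ ℕ,
      (∀ p ∈ lam.support, IsPath A vplus p vminus) →
      ((1 ≤ lam.sum fun p n => n * p.countP (fun e => decide (e ∈ B ∧ e ≠ e0))) ↔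
        (1 ≤ lam.sum fun p n => n * p.countP (fun e => decide (e ∈ B)))) := by
  refine ⟨fun p hp hmem => ?_, fun lam hlam => ?_⟩
  · obtain ⟨s, t, rfl, e, he, heB, -⟩ := hp.exists_split_of_redundant hred hmem
    have hs : 0 < s.countP (fun e => decide (e ∈ B)) := List.countP_pos_iff.2 ⟨e, he, by simpa⟩
    simp only [List.countP_append, List.countP_cons, he0, decide_true, if_true]
    omega
  simp only [Finsupp.one_le_sum_mul_countP_iff, decide_eq_true_eq]
  refine ⟨fun ⟨p, hp, e, he, heB, _⟩ => ⟨p, hp, e, he, heB⟩, fun ⟨p, hp, e, he, heB⟩ => ?_⟩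
  by_cases he0 : e = e0
  · obtain ⟨s, t, rfl, e', he', hB⟩ := (hlam p hp).exists_split_of_redundant hred (he0 ▸ he)
    exact ⟨_, hp, e', List.mem_append_left _ he', hB⟩
  · exact ⟨p, hp, e, he, heB, he0⟩

/-- Redundant-arc removal: if every path from the source to the tail of arc e₀ ∈ B meets B,
then every source-sink path through e₀ contains at least two arcs of B, and removing e₀ from
B does not change the set of integer solutions satisfying the right-branch constraint. -/
theorem stmt_10 {V : Type*} [DecidableEq V] (A B : Finset (V × V)) (hBA : B ⊆ A)
    (vplus vminus : V) (e0 : V × V) (he0 : e0 ∈ B)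
    (hred : ∀ p : List (V × V), IsPath A vplus p e0.1 → ∃ e ∈ p, e ∈ B) :
    (∀ p : List (V × V), IsPath A vplus p vminus → e0 ∈ p →
        2 ≤ p.countP (fun e => decide (e ∈ B))) ∧
    ∀ lam : (List (V × V)) →₀ ℕ,
      (∀ p ∈ lam.support, IsPath A vplus p vminus) →
      ((1 ≤ lam.sum fun p n => n * p.countP (fun e => decide (e ∈ B ∧ e ≠ e0))) ↔
        (1 ≤ lam.sum fun p n => n * p.countP (fun e => decide (e ∈ B)))) :=
  stmt_10_general A B vplus vminus e0 he0 hred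
end

section
/- (Flow decomposition equivalence of objective values) For an acyclic network, any nonnegative arc flow φ satisfying flow conservation at all intermediate nodes (with total flow z from v⁺ to v⁻) can be decomposed into a nonnegative path flow λ on source-sink paths such that φ_{(u,v)} = Σ_{p ∋ (u,v)} λ_p for each arc; under this decomposition, Σ_{(u,v)∈A} c_{(u,v)} φ_{(u,v)} = Σ_p c_p λ_p and Σ_{(u,v)∈A} a_{(u,v)} φ_{(u,v)} = Σ_p a_p λ_p. Hence the LP relaxations of the arc flow model and the path flow model have the same optimal value. -/
namespace IsPath

variable {V : Type*} {A : Finset (V × V)} {f : V → ℕ}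

lemma mem_arcs : ∀ {p : List (V × V)} {u v : V}, IsPath A u p v → ∀ e ∈ p, e ∈ A
  | [], _, _, _, _, he => absurd he List.not_mem_nil
  | _ :: _, _, _, ⟨_, hA, hrest⟩, _, he => by
    rcases List.mem_cons.1 he with rfl | he
    · exact hA
    · exact hrest.mem_arcs _ he

lemma le_potential_fst (hf : ∀ e ∈ A, f e.1 < f e.2) :
    ∀ {p : List (V × V)} {u v : V}, IsPath A u p v → ∀ e ∈ p, f u ≤ f e.1
  | [], _, _, _, _, he => absurd he List.not_mem_nil
  | e :: _, _, _, ⟨rfl, hA, hrest⟩, _, he' => by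
    rcases List.mem_cons.1 he' with rfl | he'
    · exact le_rfl
    · exact ((hf e hA).trans_le (hrest.le_potential_fst hf _ he')).le

lemma nodup (hf : ∀ e ∈ A, f e.1 < f e.2) :
    ∀ {p : List (V × V)} {u v : V}, IsPath A u p v → p.Nodup
  | [], _, _, _ => List.nodup_nil
  | e :: _, _, _, ⟨_, hA, hrest⟩ => List.nodup_cons.2
    ⟨fun he => (hf e hA).not_ge (hrest.le_potential_fst hf e he), hrest.nodup hf⟩

lemma sum_map_head_add_eq [DecidableEq V] (v : V) :
    ∀ {p : List (V × V)} {u w : V}, IsPath A u p w →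
      (p.map fun e => if e.2 = v then (1 : ℝ) else 0).sum + (if u = v then 1 else 0) =
        (p.map fun e => if e.1 = v then (1 : ℝ) else 0).sum + (if w = v then 1 else 0)
  | [], _, _, rfl => by simp
  | e :: _, _, _, ⟨rfl, _, hrest⟩ => by
    simp only [List.map_cons, List.sum_cons]
    linarith [hrest.sum_map_head_add_eq v]

end IsPath

section Flow

variable {V : Type*} [DecidableEq V]

def IsConservative (A : Finset (V × V)) (s t : V) (φ : V × V → ℝ) : Prop :=
  ∀ v, v ≠ s → v ≠ t →
    ∑ e ∈ A.filter (fun e => e.2 = v), φ e = ∑ e ∈ A.filter (fun e => e.1 = v), φ e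

variable {A : Finset (V × V)} {s t : V} {φ ψ : V × V → ℝ}

lemma IsConservative.sub (hφ : IsConservative A s t φ) (hψ : IsConservative A s t ψ) :
    IsConservative A s t (φ - ψ) := fun v hs ht => by
  simp only [Pi.sub_apply, Finset.sum_sub_distrib, hφ v hs ht, hψ v hs ht]

lemma IsConservative.const_smul (hφ : IsConservative A s t φ) (δ : ℝ) :
    IsConservative A s t (δ • φ) := fun v hs ht => by
  simp only [Pi.smul_apply, smul_eq_mul, ← Finset.mul_sum, hφ v hs ht]

lemma sum_mul_count_eq_sum_map (g : V × V → ℝ) :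
    ∀ {p : List (V × V)}, (∀ e ∈ p, e ∈ A) → ∑ e ∈ A, g e * p.count e = (p.map g).sum
  | [], _ => by simp
  | x :: p, hp => by
    have hx : x ∈ A := hp x List.mem_cons_self
    simp only [List.count_cons, beq_iff_eq, Nat.cast_add, Nat.cast_ite, Nat.cast_one,
      Nat.cast_zero, mul_add, mul_ite, mul_one, mul_zero, Finset.sum_add_distrib,
      Finset.sum_ite_eq, if_pos hx, List.map_cons, List.sum_cons,
      sum_mul_count_eq_sum_map g fun e he => hp e (List.mem_cons_of_mem x he)]
    ring

lemma sum_filter_count_eq_sum_map {p : List (V × V)} (hp : ∀ e ∈ p, e ∈ A)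
    (q : V × V → Prop) [DecidablePred q] :
    ∑ e ∈ A.filter q, (p.count e : ℝ) = (p.map fun e => if q e then (1 : ℝ) else 0).sum := by
  rw [← sum_mul_count_eq_sum_map _ hp, Finset.sum_filter]
  exact Finset.sum_congr rfl fun e _ => (boole_mul _ _).symm

lemma IsPath.isConservative_count {p : List (V × V)} (hp : IsPath A s p t) :
    IsConservative A s t (fun e => (p.count e : ℝ)) := fun v hs ht => by
  have key := hp.sum_map_head_add_eq v
  simp only [Ne.symm hs, Ne.symm ht, if_false, add_zero] at key
  rw [sum_filter_count_eq_sum_map hp.mem_arcs, sum_filter_count_eq_sum_map hp.mem_arcs, key]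

end Flow

lemma exists_isPath_of_forall_exists_next {V : Type*} {A : Finset (V × V)} {t : V} {f : V → ℕ}
    (hf : ∀ e ∈ A, f e.1 < f e.2) {P : V × V → Prop} (hPA : ∀ e, P e → e ∈ A)
    (hnext : ∀ e, P e → e.2 ≠ t → ∃ e', P e' ∧ e'.1 = e.2) {e : V × V} (he : P e) :
    ∃ p, IsPath A e.2 p t ∧ ∀ e' ∈ p, P e' := by
  induction hn : A.sup (fun e => f e.2) - f e.2 using Nat.strong_induction_on generalizing e with
  | _ n ih =>
  by_cases het : e.2 = t
  · exact ⟨[], het, by simp⟩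
  obtain ⟨e', he', he'1⟩ := hnext e he het
  have hlt : f e.2 < f e'.2 := he'1 ▸ hf e' (hPA e' he')
  have hle : f e'.2 ≤ A.sup fun e => f e.2 := Finset.le_sup (f := fun e => f e.2) (hPA e' he')
  obtain ⟨p, hp, hpP⟩ := ih _ (by omega) he' rfl
  exact ⟨e' :: p, ⟨he'1, hPA e' he', hp⟩, List.forall_mem_cons.2 ⟨he', hpP⟩⟩

namespace IsConservative

variable {V : Type*} [DecidableEq V] {A : Finset (V × V)} {s t : V} {f : V → ℕ}
  {φ : V × V → ℝ}

lemma exists_pos_in_iff_exists_pos_out (hcons : IsConservative A s t φ)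
    (hφ : ∀ e ∈ A, 0 ≤ φ e) {v : V} (hs : v ≠ s) (ht : v ≠ t) :
    (∃ e ∈ A, e.2 = v ∧ 0 < φ e) ↔ ∃ e ∈ A, e.1 = v ∧ 0 < φ e := by
  have hsum (q : V × V → Prop) [DecidablePred q] :
      (∃ e ∈ A, q e ∧ 0 < φ e) ↔ 0 < ∑ e ∈ A.filter q, φ e := by
    rw [Finset.sum_pos_iff_of_nonneg fun e he => hφ e (Finset.mem_filter.1 he).1]
    simp only [Finset.mem_filter, and_assoc]
  rw [hsum, hsum, hcons v hs ht]

lemma exists_pos_arc_from_source (hcons : IsConservative A s t φ) (hφ : ∀ e ∈ A, 0 ≤ φ e)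
    (hf : ∀ e ∈ A, f e.1 < f e.2) (ht : ∀ e ∈ A, e.1 ≠ t) (hpos : ∃ e ∈ A, 0 < φ e) :
    ∃ e ∈ A, e.1 = s ∧ 0 < φ e := by
  obtain ⟨e, he, hmin⟩ := (A.filter fun e => 0 < φ e).exists_min_image (fun e => f e.1)
    (Finset.filter_nonempty_iff.2 hpos)
  rw [Finset.mem_filter] at he
  refine ⟨e, he.1, of_not_not fun hs => ?_, he.2⟩
  obtain ⟨e', he'A, he'2, he'pos⟩ :=
    (hcons.exists_pos_in_iff_exists_pos_out hφ hs (ht e he.1)).2 ⟨e, he.1, rfl, he.2⟩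
  have hle := hmin e' (Finset.mem_filter.2 ⟨he'A, he'pos⟩)
  have hlt := he'2 ▸ hf e' he'A
  omega

lemma exists_isPath_forall_pos (hcons : IsConservative A s t φ) (hφ : ∀ e ∈ A, 0 ≤ φ e)
    (hf : ∀ e ∈ A, f e.1 < f e.2) (hs : ∀ e ∈ A, e.2 ≠ s) (ht : ∀ e ∈ A, e.1 ≠ t)
    (hpos : ∃ e ∈ A, 0 < φ e) :
    ∃ p ≠ [], IsPath A s p t ∧ ∀ e ∈ p, 0 < φ e := by
  obtain ⟨e₀, he₀A, he₀s, he₀pos⟩ := hcons.exists_pos_arc_from_source hφ hf ht hpos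
  have hnext (e : V × V) (he : e ∈ A ∧ 0 < φ e) (het : e.2 ≠ t) :
      ∃ e', (e' ∈ A ∧ 0 < φ e') ∧ e'.1 = e.2 := by
    obtain ⟨e', he'A, he'1, he'pos⟩ :=
      (hcons.exists_pos_in_iff_exists_pos_out hφ (hs e he.1) het).1 ⟨e, he.1, rfl, he.2⟩
    exact ⟨e', ⟨he'A, he'pos⟩, he'1⟩
  obtain ⟨p, hp, hpP⟩ :=
    exists_isPath_of_forall_exists_next hf (fun _ he => he.1) hnext ⟨he₀A, he₀pos⟩
  exact ⟨e₀ :: p, List.cons_ne_nil _ _, ⟨he₀s, he₀A, hp⟩,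
    List.forall_mem_cons.2 ⟨he₀pos, fun e he => (hpP e he).2⟩⟩

end IsConservative

lemma card_filter_sub_ne_zero_lt {ι G : Type*} [AddGroup G] [DecidableEq G] {A : Finset ι}
    {φ ψ : ι → G} (hψ : ∀ e ∈ A, ψ e ≠ 0 → φ e ≠ 0) {e₁ : ι}
    (he₁ : e₁ ∈ A) (hφe₁ : φ e₁ ≠ 0) (hψe₁ : φ e₁ = ψ e₁) :
    (A.filter fun e => (φ - ψ) e ≠ 0).card < (A.filter fun e => φ e ≠ 0).card := by
  refine Finset.card_lt_card (Finset.ssubset_iff_of_subset ?_ |>.2 ⟨e₁, ?_, ?_⟩)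
  · intro e he
    rw [Finset.mem_filter] at he ⊢
    refine ⟨he.1, fun h0 => he.2 ?_⟩
    rw [Pi.sub_apply, h0, zero_sub, neg_eq_zero]
    exact not_imp_not.1 (hψ e he.1) h0
  · exact Finset.mem_filter.2 ⟨he₁, hφe₁⟩
  · simp [hψe₁]

section Decomposition

variable {V : Type*} [DecidableEq V] {A : Finset (V × V)} {s t : V}

theorem IsConservative.exists_path_decomposition {f : V → ℕ} (hf : ∀ e ∈ A, f e.1 < f e.2)
    (hs : ∀ e ∈ A, e.2 ≠ s) (ht : ∀ e ∈ A, e.1 ≠ t) {φ : V × V → ℝ}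
    (hφ : ∀ e ∈ A, 0 ≤ φ e) (hcons : IsConservative A s t φ) :
    ∃ lam : List (V × V) →₀ ℝ, (∀ p, 0 ≤ lam p) ∧ (∀ p ∈ lam.support, IsPath A s p t) ∧
      ∀ e ∈ A, φ e = lam.sum fun p x => x * (p.count e : ℝ) := by
  induction hn : (A.filter fun e => φ e ≠ 0).card using Nat.strong_induction_on
    generalizing φ with
  | _ n ih =>
  by_cases hpos : ∃ e ∈ A, 0 < φ e
  swap
  · push Not at hpos
    exact ⟨0, fun _ => le_rfl, by simp, fun e he => by simpa using (hpos e he).antisymm (hφ e he)⟩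
  obtain ⟨p, hp_ne, hp, hppos⟩ := hcons.exists_isPath_forall_pos hφ hf hs ht hpos
  obtain ⟨e₁, he₁, hmin⟩ := p.toFinset.exists_min_image φ (List.toFinset_nonempty_iff _ |>.2 hp_ne)
  rw [List.mem_toFinset] at he₁
  set ψ : V × V → ℝ := φ e₁ • fun e => (p.count e : ℝ) with hψ
  have hψ_apply (e : V × V) : ψ e = if e ∈ p then φ e₁ else 0 := by
    simp only [hψ, Pi.smul_apply, smul_eq_mul, (hp.nodup hf).count, Nat.cast_ite, Nat.cast_one,
      Nat.cast_zero, mul_ite, mul_one, mul_zero]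
  have hφψ : ∀ e ∈ A, 0 ≤ (φ - ψ) e := fun e he => by
    rw [Pi.sub_apply, hψ_apply, sub_nonneg]
    split_ifs with hep
    · exact hmin e (List.mem_toFinset.2 hep)
    · exact hφ e he
  have hlt : (A.filter fun e => (φ - ψ) e ≠ 0).card < n := hn ▸ card_filter_sub_ne_zero_lt
    (fun e _ h => by rw [hψ_apply] at h; exact (hppos e (by_contra fun hep => h (if_neg hep))).ne')
    (hp.mem_arcs e₁ he₁) (hppos e₁ he₁).ne' (by rw [hψ_apply, if_pos he₁])
  obtain ⟨lam, hlam_nn, hlam_paths, hlam_load⟩ :=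
    ih _ hlt hφψ (hcons.sub (hp.isConservative_count.const_smul _)) rfl
  refine ⟨lam + Finsupp.single p (φ e₁), fun q => ?_, fun q hq => ?_, fun e he => ?_⟩
  · exact add_nonneg (hlam_nn q) (Finsupp.single_nonneg.2 (hφ e₁ (hp.mem_arcs e₁ he₁)) q)
  · rcases Finset.mem_union.1 (Finsupp.support_add hq) with hq | hq
    · exact hlam_paths q hq
    · rw [Finset.mem_singleton.1 (Finsupp.support_single_subset hq)]
      exact hp
  · rw [Finsupp.sum_add_index' (fun _ => zero_mul _) (fun _ _ _ => add_mul _ _ _),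
      Finsupp.sum_single_index (zero_mul _), ← hlam_load e he]
    simp only [hψ, Pi.sub_apply, Pi.smul_apply, smul_eq_mul, sub_add_cancel]

lemma sum_mul_eq_finsupp_sum_map_sum {φ : V × V → ℝ} {lam : List (V × V) →₀ ℝ}
    (hlam : ∀ p ∈ lam.support, IsPath A s p t)
    (hload : ∀ e ∈ A, φ e = lam.sum fun p x => x * (p.count e : ℝ)) (g : V × V → ℝ) :
    ∑ e ∈ A, g e * φ e = lam.sum fun p x => x * (p.map g).sum := by
  calc ∑ e ∈ A, g e * φ e
      = ∑ e ∈ A, ∑ p ∈ lam.support, lam p * (g e * p.count e) := by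
        refine Finset.sum_congr rfl fun e he => ?_
        rw [hload e he, Finsupp.sum, Finset.mul_sum]
        exact Finset.sum_congr rfl fun p _ => by ring
    _ = lam.sum fun p x => x * (p.map g).sum := by
        rw [Finset.sum_comm, Finsupp.sum]
        refine Finset.sum_congr rfl fun p hp => ?_
        rw [← Finset.mul_sum, sum_mul_count_eq_sum_map g (hlam p hp).mem_arcs]

end Decomposition

theorem stmt_11_general {V : Type*} [DecidableEq V] (A : Finset (V × V)) (m : ℕ)
    (c : V × V → ℤ) (a : V × V → Fin m → ℤ)
    (vplus vminus : V)
    (f : V → ℕ) (hacyc : ∀ e ∈ A, f e.1 < f e.2)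
    (hs : ∀ e ∈ A, e.2 ≠ vplus) (ht : ∀ e ∈ A, e.1 ≠ vminus)
    (φ : V × V → ℝ) (hφ : ∀ e, 0 ≤ φ e)
    (hcons : ∀ v : V, v ≠ vplus → v ≠ vminus →
      ∑ e ∈ A.filter (fun e => e.2 = v), φ e = ∑ e ∈ A.filter (fun e => e.1 = v), φ e) :
    ∃ lam : (List (V × V)) →₀ ℝ,
      (∀ p, 0 ≤ lam p) ∧
      (∀ p ∈ lam.support, IsPath A vplus p vminus) ∧
      (∀ e ∈ A, φ e = lam.sum fun p x => x * (p.count e : ℝ)) ∧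
      (∑ e ∈ A, (c e : ℝ) * φ e = lam.sum fun p x => x * (((p.map c).sum : ℤ) : ℝ)) ∧
      (∀ k, ∑ e ∈ A, (a e k : ℝ) * φ e =
        lam.sum fun p x => x * (((p.map fun e => a e k).sum : ℤ) : ℝ)) := by
  obtain ⟨lam, hlam_nn, hlam_paths, hload⟩ :=
    IsConservative.exists_path_decomposition hacyc hs ht (fun e _ => hφ e) hcons
  have hcost (g : V × V → ℤ) :
      ∑ e ∈ A, (g e : ℝ) * φ e = lam.sum fun p x => x * (((p.map g).sum : ℤ) : ℝ) := by
    rw [sum_mul_eq_finsupp_sum_map_sum hlam_paths hload]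
    simp only [Int.cast_list_sum, List.map_map, Function.comp_def]
  exact ⟨lam, hlam_nn, hlam_paths, hload, hcost c, fun k => hcost fun e => a e k⟩

/-- Flow decomposition: a nonnegative conservative arc flow on an acyclic source-sink network
decomposes into a nonnegative path flow with the same arc usage, objective value, and
constraint contributions. -/
theorem stmt_11 {V : Type*} [Fintype V] [DecidableEq V] (A : Finset (V × V)) (m : ℕ)
    (c : V × V → ℤ) (a : V × V → Fin m → ℤ)
    (vplus vminus : V)
    (f : V → ℕ) (hacyc : ∀ e ∈ A, f e.1 < f e.2)
    (hs : ∀ e ∈ A, e.2 ≠ vplus) (ht : ∀ e ∈ A, e.1 ≠ vminus)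
    (φ : V × V → ℝ) (hφ : ∀ e, 0 ≤ φ e) (hsupp : ∀ e ∉ A, φ e = 0)
    (hcons : ∀ v : V, v ≠ vplus → v ≠ vminus →
      ∑ e ∈ A.filter (fun e => e.2 = v), φ e = ∑ e ∈ A.filter (fun e => e.1 = v), φ e) :
    ∃ lam : (List (V × V)) →₀ ℝ,
      (∀ p, 0 ≤ lam p) ∧
      (∀ p ∈ lam.support, IsPath A vplus p vminus) ∧
      (∀ e ∈ A, φ e = lam.sum fun p x => x * (p.count e : ℝ)) ∧
      (∑ e ∈ A, (c e : ℝ) * φ e = lam.sum fun p x => x * (((p.map c).sum : ℤ) : ℝ)) ∧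
      (∀ k, ∑ e ∈ A, (a e k : ℝ) * φ e =
        lam.sum fun p x => x * (((p.map fun e => a e k).sum : ℤ) : ℝ)) :=
  stmt_11_general A m c a vplus vminus f hacyc hs ht φ hφ hcons
end
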